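/- Let α, β, γ, λ, μ be real numbers and let N(α,β,γ,λ,μ) be the 3×3 real matrix whose rows are (α,β,γ), (λα,λβ,λγ), (μα,μβ,μγ). Suppose α ≠ 0 and α² + λβ² + μγ² ≠ 0. If one of the following holds: (1) λ > 0, μ < 0 and α² + λβ² + μγ² > 0; (2) λ < 0, μ > 0, α² + λβ² < 0 and α² + λβ² + μγ² > 0; (3) λ < 0, μ > 0 and α² + λβ² > 0; (4) λ < 0, μ < 0, α² + λβ² > 0 and α² + λβ² + μγ² < 0; (5) λ < 0, μ < 0 and α² + λβ² < 0; (6) λ ≠ 0, μ ≠ 0 and α² + λβ² = 0; then the evolution algebra E_{N(α,β,γ,λ,μ)} is isomorphic to the evolution algebra E₈ whose structure matrix has rows (1,0,0), (1,0,0), (−1,0,0). -/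

import Mathlib

/-- Evolution algebra multiplication on ℝ³ determined by a structure matrix `A`:
`(x ∗_A y) j = ∑ i, x i * y i * A i j`. -/
def evolMul (A : Matrix (Fin 3) (Fin 3) ℝ) (x y : Fin 3 → ℝ) : Fin 3 → ℝ :=
  fun j => ∑ i, x i * y i * A i j

/-- The evolution algebras with structure matrices `A` and `B` are isomorphic:
there is an ℝ-linear equivalence of ℝ³ intertwining the two multiplications. -/
def EvolIso (A B : Matrix (Fin 3) (Fin 3) ℝ) : Prop :=
  ∃ f : (Fin 3 → ℝ) ≃ₗ[ℝ] (Fin 3 → ℝ),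
    ∀ x y, f (evolMul A x y) = evolMul B (f x) (f y)

/-!
Both algebras have a product of the form `x ∗ y = B(x, y) • u` for a diagonal bilinear form `B`:
for `N` the form `K = diag(1, l, m)` and `u = v = (a, b, c)`, for `E₈` the form `J = diag(1, 1, -1)`
and `u = e₀`. Hence an invertible `M` with `Mᵀ J M = Q K` and `M v = Q e₀`, where `Q = vᵀ K v`, is
an isomorphism. Such an `M` is built row by row: the first row is `K v`, the other two lie in `v^⊥`
and are orthogonal for the dual form `K⁻¹`, with squares `Q` and `-Q`. This can be arranged whenever
`l m Q < 0`, which is what each case hypothesis amounts to; when `a² + l b² = 0` the obvious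
orthogonal basis of `v^⊥` degenerates and a hyperbolic pair is used instead.
-/

open Matrix

lemma evolMul_vecMulVec (d v x y : Fin 3 → ℝ) :
    evolMul (vecMulVec d v) x y = (x ⬝ᵥ diagonal d *ᵥ y) • v := by
  ext j
  simp only [evolMul, vecMulVec_apply, Pi.smul_apply, smul_eq_mul, dotProduct, mulVec_diagonal,
    Finset.sum_mul]
  exact Finset.sum_congr rfl fun i _ => by ring

lemma transpose_of_mul_diagonal_mul_of {n : Type*} [Fintype n] [DecidableEq n]
    (r : n → n → ℝ) (d : n → ℝ) :
    (of r)ᵀ * diagonal d * of r = ∑ i, d i • vecMulVec (r i) (r i) := by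
  ext j k
  simp only [mul_apply (M := (of r)ᵀ * diagonal d), mul_diagonal, transpose_apply, of_apply,
    Matrix.sum_apply, Matrix.smul_apply, vecMulVec_apply, smul_eq_mul]
  exact Finset.sum_congr rfl fun i _ => by ring

lemma evolIso_vecMulVec_of_transpose_mul {d d' v u : Fin 3 → ℝ} {Q : ℝ}
    (M : Matrix (Fin 3) (Fin 3) ℝ) (hd : ∀ i, d i ≠ 0) (hQ : Q ≠ 0)
    (hM : Mᵀ * diagonal d' * M = Q • diagonal d) (hv : M *ᵥ v = Q • u) :
    EvolIso (vecMulVec d v) (vecMulVec d' u) := by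
  have hdet : M.det ≠ 0 := by
    have h := congrArg det hM
    rw [det_mul, det_mul, det_transpose, det_smul, det_diagonal, det_diagonal] at h
    have : Q ^ Fintype.card (Fin 3) * ∏ i, d i ≠ 0 :=
      mul_ne_zero (pow_ne_zero _ hQ) (Finset.prod_ne_zero_iff.2 fun i _ => hd i)
    rw [← h] at this
    exact right_ne_zero_of_mul this
  set f := M.toLinearEquiv' (M.invertibleOfIsUnitDet (isUnit_iff_ne_zero.2 hdet))
  have hf : ∀ z, f z = M *ᵥ z := fun _ => rfl
  refine ⟨f, fun x y => ?_⟩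
  have hform : M *ᵥ x ⬝ᵥ diagonal d' *ᵥ M *ᵥ y = Q * (x ⬝ᵥ diagonal d *ᵥ y) := by
    rw [dotProduct_mulVec, ← vecMul_transpose, vecMul_vecMul, ← dotProduct_mulVec, mulVec_mulVec,
      hM, smul_mulVec, dotProduct_smul, smul_eq_mul]
  rw [hf, hf, hf, evolMul_vecMulVec, evolMul_vecMulVec, mulVec_smul, hv, hform, smul_smul,
    mul_comm]

lemma evolIso_vecMulVec_of_rows {d v : Fin 3 → ℝ} {Q : ℝ} (r₀ r₁ r₂ : Fin 3 → ℝ)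
    (hd : ∀ i, d i ≠ 0) (hQ : Q ≠ 0)
    (hr : vecMulVec r₀ r₀ + vecMulVec r₁ r₁ - vecMulVec r₂ r₂ = Q • diagonal d)
    (h₀ : r₀ ⬝ᵥ v = Q) (h₁ : r₁ ⬝ᵥ v = 0) (h₂ : r₂ ⬝ᵥ v = 0) :
    EvolIso (vecMulVec d v) (vecMulVec ![1, 1, -1] ![1, 0, 0]) := by
  refine evolIso_vecMulVec_of_transpose_mul (of ![r₀, r₁, r₂]) hd hQ ?_ ?_
  · rw [transpose_of_mul_diagonal_mul_of]
    simpa [Fin.sum_univ_three, sub_eq_add_neg] using hr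
  · ext i; fin_cases i <;> simp [mulVec, h₀, h₁, h₂]

variable {a b c l m : ℝ}

/-- With `S = a² + l b²`, the vectors `K v`, `(b, -a, 0)` and `(a c, l b c, -S)` are pairwise
orthogonal for `diag(1, 1/l, 1/m)`, with squares `Q`, `S / l` and `S Q / m`; this is `Q K` expanded
in that orthogonal basis. -/
lemma smul_diagonal_eq_vecMulVec_add (hS : a ^ 2 + l * b ^ 2 ≠ 0) :
    vecMulVec ![a, l * b, m * c] ![a, l * b, m * c]
      + (l * (a ^ 2 + l * b ^ 2 + m * c ^ 2) / (a ^ 2 + l * b ^ 2)) •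
          vecMulVec ![b, -a, 0] ![b, -a, 0]
      + (m / (a ^ 2 + l * b ^ 2)) • vecMulVec ![a * c, l * b * c, -(a ^ 2 + l * b ^ 2)]
          ![a * c, l * b * c, -(a ^ 2 + l * b ^ 2)]
      = (a ^ 2 + l * b ^ 2 + m * c ^ 2) • diagonal ![1, l, m] := by
  ext i j
  fin_cases i <;> fin_cases j <;> simp <;> field_simp <;> ring

lemma evolIso_of_sq_add_mul_sq_ne_zero (hS : a ^ 2 + l * b ^ 2 ≠ 0)
    (hlmQ : l * m * (a ^ 2 + l * b ^ 2 + m * c ^ 2) < 0) :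
    EvolIso (vecMulVec ![1, l, m] ![a, b, c]) (vecMulVec ![1, 1, -1] ![1, 0, 0]) := by
  set S := a ^ 2 + l * b ^ 2
  set Q := S + m * c ^ 2
  have hQ : Q ≠ 0 := right_ne_zero_of_mul hlmQ.ne
  have hl : l ≠ 0 := left_ne_zero_of_mul (left_ne_zero_of_mul hlmQ.ne)
  have hm : m ≠ 0 := right_ne_zero_of_mul (left_ne_zero_of_mul hlmQ.ne)
  have hd : ∀ i, ![1, l, m] i ≠ 0 := by intro i; fin_cases i <;> simp [hl, hm]
  have h₀ : ![a, l * b, m * c] ⬝ᵥ ![a, b, c] = Q := by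
    simp [dotProduct, Fin.sum_univ_three, Q, S]; ring
  have h₁ : ![b, -a, 0] ⬝ᵥ ![a, b, c] = 0 := by simp [dotProduct, Fin.sum_univ_three]; ring
  have h₂ : ![a * c, l * b * c, -S] ⬝ᵥ ![a, b, c] = 0 := by
    simp [dotProduct, Fin.sum_univ_three, S]; ring
  have key := smul_diagonal_eq_vecMulVec_add (c := c) (m := m) hS
  -- the sign of `l Q / S` (opposite to that of `m / S`) decides which row gets the sign `-1`
  have hprod : l * Q / S * (m / S) < 0 := by
    rw [div_mul_div_comm, ← sq]
    exact div_neg_of_neg_of_pos (by linarith) (by positivity)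
  rcases lt_or_gt_of_ne (div_ne_zero (mul_ne_zero hl hQ) hS) with hneg | hpos
  · have hmS : 0 < m / S := pos_of_mul_neg_right hprod hneg.le
    refine evolIso_vecMulVec_of_rows _ (√(m / S) • ![a * c, l * b * c, -S])
      (√(-(l * Q / S)) • ![b, -a, 0]) hd hQ ?_ h₀
      (by rw [smul_dotProduct, h₂, smul_zero]) (by rw [smul_dotProduct, h₁, smul_zero])
    simp only [smul_vecMulVec, vecMulVec_smul, smul_smul, ← sq]
    rw [Real.sq_sqrt hmS.le, Real.sq_sqrt (by linarith), ← key]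
    module
  · have hmS : m / S < 0 := neg_of_mul_neg_right hprod hpos.le
    refine evolIso_vecMulVec_of_rows _ (√(l * Q / S) • ![b, -a, 0])
      (√(-(m / S)) • ![a * c, l * b * c, -S]) hd hQ ?_ h₀
      (by rw [smul_dotProduct, h₁, smul_zero]) (by rw [smul_dotProduct, h₂, smul_zero])
    simp only [smul_vecMulVec, vecMulVec_smul, smul_smul, ← sq]
    rw [Real.sq_sqrt hpos.le, Real.sq_sqrt (by linarith), ← key]
    module

lemma evolIso_of_sq_add_mul_sq_eq_zero (ha : a ≠ 0) (hQ : a ^ 2 + l * b ^ 2 + m * c ^ 2 ≠ 0)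
    (hS : a ^ 2 + l * b ^ 2 = 0) :
    EvolIso (vecMulVec ![1, l, m] ![a, b, c]) (vecMulVec ![1, 1, -1] ![1, 0, 0]) := by
  rw [hS, zero_add] at hQ
  have hm : m ≠ 0 := left_ne_zero_of_mul hQ
  have hc : c ≠ 0 := (pow_ne_zero_iff two_ne_zero).1 (right_ne_zero_of_mul hQ)
  have hb : b ≠ 0 := by
    rintro rfl
    exact ha (by simpa using hS)
  have hl : l = -a ^ 2 / b ^ 2 := by
    rw [eq_div_iff (by positivity)]
    linear_combination hS
  -- Both rows are `x • w + u` with `w = (b, -a, 0)`, `u = (c, 0, -a)` orthogonal to `v`; since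
  -- `a² + l b² = 0`, `w` is isotropic for `diag(1, 1/l, 1/m)`, and the two values of `x` are solved
  -- for so that `r₁ r₁ᵀ - r₂ r₂ᵀ = Q K - (K v)(K v)ᵀ`.
  refine evolIso_vecMulVec_of_rows ![a, l * b, m * c]
    (((m ^ 2 * c ^ 2 - m * c ^ 2 - a ^ 2) / (2 * m * b * c)) • ![b, -a, 0] + ![c, 0, -a])
    (-((m ^ 2 * c ^ 2 + m * c ^ 2 + a ^ 2) / (2 * m * b * c)) • ![b, -a, 0] + ![c, 0, -a])
    ?_ hQ ?_ ?_ ?_ ?_ <;> subst hl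
  · intro i; fin_cases i <;> simp [ha, hb, hm]
  · ext i j
    fin_cases i <;> fin_cases j <;> simp <;> field_simp <;> ring
  all_goals simp [dotProduct, Fin.sum_univ_three]; field_simp; ring

theorem stmt (a b c l m : ℝ)
    (ha : a ≠ 0) (hq : a ^ 2 + l * b ^ 2 + m * c ^ 2 ≠ 0)
    (hcond : (l > 0 ∧ m < 0 ∧ a ^ 2 + l * b ^ 2 + m * c ^ 2 > 0) ∨
             (l < 0 ∧ m > 0 ∧ a ^ 2 + l * b ^ 2 < 0 ∧ a ^ 2 + l * b ^ 2 + m * c ^ 2 > 0) ∨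
             (l < 0 ∧ m > 0 ∧ a ^ 2 + l * b ^ 2 > 0) ∨
             (l < 0 ∧ m < 0 ∧ a ^ 2 + l * b ^ 2 > 0 ∧ a ^ 2 + l * b ^ 2 + m * c ^ 2 < 0) ∨
             (l < 0 ∧ m < 0 ∧ a ^ 2 + l * b ^ 2 < 0) ∨
             (l ≠ 0 ∧ m ≠ 0 ∧ a ^ 2 + l * b ^ 2 = 0)) :
    EvolIso (!![a, b, c; l * a, l * b, l * c; m * a, m * b, m * c] : Matrix (Fin 3) (Fin 3) ℝ) (!![1, 0, 0; 1, 0, 0; -1, 0, 0] : Matrix (Fin 3) (Fin 3) ℝ) := by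
  have hN : !![a, b, c; l * a, l * b, l * c; m * a, m * b, m * c] =
      vecMulVec ![1, l, m] ![a, b, c] := by
    ext i j; fin_cases i <;> fin_cases j <;> simp
  have hE : !![1, 0, 0; 1, 0, 0; -1, 0, 0] = vecMulVec ![1, 1, -1] ![(1 : ℝ), 0, 0] := by
    ext i j; fin_cases i <;> fin_cases j <;> simp
  rw [hN, hE]
  by_cases hS : a ^ 2 + l * b ^ 2 = 0
  · exact evolIso_of_sq_add_mul_sq_eq_zero ha hq hS
  refine evolIso_of_sq_add_mul_sq_ne_zero hS ?_
  rcases hcond with ⟨hl, hm, hQ⟩ | ⟨hl, hm, -, hQ⟩ | ⟨hl, hm, hS₀⟩ | ⟨hl, hm, -, hQ⟩ |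
    ⟨hl, hm, hS₀⟩ | ⟨-, -, hS₀⟩
  · exact mul_neg_of_neg_of_pos (mul_neg_of_pos_of_neg hl hm) hQ
  · exact mul_neg_of_neg_of_pos (mul_neg_of_neg_of_pos hl hm) hQ
  · exact mul_neg_of_neg_of_pos (mul_neg_of_neg_of_pos hl hm) (by nlinarith [sq_nonneg c])
  · exact mul_neg_of_pos_of_neg (mul_pos_of_neg_of_neg hl hm) hQ
  · exact mul_neg_of_pos_of_neg (mul_pos_of_neg_of_neg hl hm) (by nlinarith [sq_nonneg c])
  · exact absurd hS₀ hS
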